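/- arXiv:2210.02371 — 2 statements merged into one kernel-verified Lean document; each statement's English description precedes it below -/
import Mathlib

section
/- With l_i = 2^{2·2^i+4}, m_i = 2^{8·2^i}, n_i = 2^{10·2^i}, for all i ≥ 1, min(|u_i|_0/|u_i|, |v_i|_1/|v_i|) ≥ ∏_{j=1}^{i} 1/(1+2^{-2^j}). -/
/-- The `k`-th power of a finite word `w` (concatenation of `k` copies). -/
def wpow (w : List Bool) (k : ℕ) : List Bool := (List.replicate k w).flatten

/-- The pair of words `(u_i, v_i)`:  `u_0 = 0`, `v_0 = 1`,
`u_{i+1} = u_i^{m_i} v_i^{l_i}`, `v_{i+1} = u_i^{m_i} v_i^{n_i}`. -/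
def uvSeq (l m n : ℕ → ℕ) : ℕ → List Bool × List Bool
  | 0 => ([false], [true])
  | i + 1 =>
      (wpow (uvSeq l m n i).1 (m i) ++ wpow (uvSeq l m n i).2 (l i),
       wpow (uvSeq l m n i).1 (m i) ++ wpow (uvSeq l m n i).2 (n i))

/-- The substitution `σ_h` : `0 ↦ 0^{m_h} 1^{l_h}`, `1 ↦ 0^{m_h} 1^{n_h}`. -/
def subw (l m n : ℕ → ℕ) (h : ℕ) (w : List Bool) : List Bool :=
  w.flatMap fun c => List.replicate (m h) false ++ List.replicate (if c then n h else l h) true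

/-- `wordIter i h = σ_h σ_{h+1} ⋯ σ_{h+i-1}(0)`. -/
def wordIter (l m n : ℕ → ℕ) : ℕ → ℕ → List Bool
  | 0, _ => [false]
  | i + 1, h => subw l m n h (wordIter l m n i (h + 1))

/-- The infinite word `u^{(h)} = lim_i σ_h ⋯ σ_{h+i-1}(0)`. -/
def limWord (l m n : ℕ → ℕ) (h : ℕ) (k : ℕ) : Bool :=
  (wordIter l m n (k + 1) h).getD k false

/-- `w` is a factor of the infinite word `U`. -/
def IsFactor (U : ℕ → Bool) (w : List Bool) : Prop :=
  ∃ k, w = (List.range w.length).map fun j => U (k + j)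

/-- `σ_0 σ_1 ⋯ σ_{h+i-1}` starting at `h`, applied to `w`. -/
def subComp (l m n : ℕ → ℕ) : ℕ → ℕ → List Bool → List Bool
  | 0, _, w => w
  | i + 1, h, w => subw l m n h (subComp l m n i (h + 1) w)

/-- `\hat{σ}_h(w) = 1^{l_h} σ_h(w) 0^{m_h} 1^{l_h}`. -/
def hatw (l m n : ℕ → ℕ) (h : ℕ) (w : List Bool) : List Bool :=
  List.replicate (l h) true ++ subw l m n h w ++
    List.replicate (m h) false ++ List.replicate (l h) true

/-- `hatComp i h w = \hat{σ}_h ⋯ \hat{σ}_{h+i-1}(w)`. -/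
def hatComp (l m n : ℕ → ℕ) : ℕ → ℕ → List Bool → List Bool
  | 0, _, w => w
  | i + 1, h, w => hatw l m n h (hatComp l m n i (h + 1) w)

/-- The complexity function of the infinite word `U`. -/
noncomputable def complexityFn (U : ℕ → Bool) (nn : ℕ) : ℕ :=
  Set.ncard {w : List Bool | w.length = nn ∧ IsFactor U w}

lemma wpow_length (w : List Bool) (k : ℕ) : (wpow w k).length = k * w.length := by
  induction k with
  | zero => simp [wpow]
  | succ k ih =>
    simp only [wpow, List.replicate_succ, List.flatten_cons, List.length_append] at *
    rw [ih]; ring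

lemma wpow_count (w : List Bool) (k : ℕ) (b : Bool) :
    (wpow w k).count b = k * w.count b := by
  induction k with
  | zero => simp [wpow]
  | succ k ih =>
    simp only [wpow, List.replicate_succ, List.flatten_cons, List.count_append] at *
    rw [ih]; ring

section main
variable (l m n : ℕ → ℕ)

lemma lenA (i : ℕ) : (uvSeq l m n (i+1)).1.length
    = m i * (uvSeq l m n i).1.length + l i * (uvSeq l m n i).2.length := by
  simp [uvSeq, wpow_length]

lemma lenB (i : ℕ) : (uvSeq l m n (i+1)).2.length
    = m i * (uvSeq l m n i).1.length + n i * (uvSeq l m n i).2.length := by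
  simp [uvSeq, wpow_length]

lemma cntA (i : ℕ) (b : Bool) : (uvSeq l m n (i+1)).1.count b
    = m i * (uvSeq l m n i).1.count b + l i * (uvSeq l m n i).2.count b := by
  simp [uvSeq, wpow_count]

lemma cntB (i : ℕ) (b : Bool) : (uvSeq l m n (i+1)).2.count b
    = m i * (uvSeq l m n i).1.count b + n i * (uvSeq l m n i).2.count b := by
  simp [uvSeq, wpow_count]

variable (hl : ∀ i, l i = 2 ^ (2 * 2 ^ i + 4))
    (hm : ∀ i, m i = 2 ^ (8 * 2 ^ i)) (hn : ∀ i, n i = 2 ^ (10 * 2 ^ i))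

include hl hn in
lemma A_le_B (i : ℕ) : (uvSeq l m n i).1.length ≤ (uvSeq l m n i).2.length := by
  induction i with
  | zero => simp [uvSeq]
  | succ i ih =>
    rw [lenA, lenB]
    have hln : l i ≤ n i := by
      rw [hl, hn]
      apply Nat.pow_le_pow_right (by norm_num)
      have : 1 ≤ 2 ^ i := Nat.one_le_two_pow
      omega
    have h2 := Nat.mul_le_mul_right ((uvSeq l m n i).2.length) hln
    omega

include hl hm hn in
lemma key1 (i : ℕ) (hi : 1 ≤ i) :
    l i * 2 ^ (2 ^ (i+1)) * (uvSeq l m n i).2.length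
      ≤ m i * (uvSeq l m n i).1.length := by
  obtain ⟨j, rfl⟩ : ∃ j, i = j + 1 := ⟨i - 1, by omega⟩
  rw [lenA, lenB]
  set A := (uvSeq l m n j).1.length
  set B := (uvSeq l m n j).2.length with hB
  rw [hl, hm, hl, hm, hn]
  set e := 2 ^ j with he
  have h2 : 1 ≤ e := Nat.one_le_two_pow
  have hpow1 : (2:ℕ) ^ (j + 1) = 2 * e := by rw [pow_succ]; ring
  have hpow2 : (2:ℕ) ^ (j + 1 + 1) = 4 * e := by rw [pow_succ, pow_succ]; ring
  rw [hpow1, hpow2]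
  have eL : 2 ^ (2*(2*e)+4) * 2 ^ (4*e) * (2 ^ (8*e)*A + 2 ^ (10*e)*B)
      = 2 ^ (16*e+4)*A + 2 ^ (18*e+4)*B := by ring
  have eR : 2 ^ (8*(2*e)) * (2 ^ (8*e)*A + 2 ^ (2*e+4)*B)
      = 2 ^ (24*e)*A + 2 ^ (18*e+4)*B := by ring
  rw [eL, eR]
  have h1 : (2:ℕ) ^ (16*e+4) ≤ 2 ^ (24*e) :=
    Nat.pow_le_pow_right (by norm_num) (by omega)
  exact Nat.add_le_add (Nat.mul_le_mul_right A h1) le_rfl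

include hl hm hn in
lemma key2 (i : ℕ) :
    m i * 2 ^ (2 ^ (i+1)) * (uvSeq l m n i).1.length
      ≤ n i * (uvSeq l m n i).2.length := by
  have hAB := A_le_B l m n hl hn i
  rw [hm, hn]
  have : (2:ℕ) ^ (8 * 2 ^ i) * 2 ^ (2 ^ (i+1)) = 2 ^ (10 * 2 ^ i) := by
    rw [← pow_add]; congr 1; rw [pow_succ]; ring
  rw [this]
  exact Nat.mul_le_mul_left _ hAB

end main

section real
variable (l m n : ℕ → ℕ)
variable (hl : ∀ i, l i = 2 ^ (2 * 2 ^ i + 4))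
    (hm : ∀ i, m i = 2 ^ (8 * 2 ^ i)) (hn : ∀ i, n i = 2 ^ (10 * 2 ^ i))

include hm in
lemma len_pos (i : ℕ) : 0 < (uvSeq l m n i).1.length ∧ 0 < (uvSeq l m n i).2.length := by
  induction i with
  | zero => simp [uvSeq]
  | succ i ih =>
    rw [lenA, lenB]
    have hm' : 0 < m i := by rw [hm]; positivity
    constructor <;> nlinarith [ih.1, ih.2]

include hl hm hn in
lemma main_ind (i : ℕ) (hi : 1 ≤ i) :
    (∏ j ∈ Finset.Icc 1 i, (1 + ((2 : ℝ) ^ (2 ^ j))⁻¹)⁻¹) * ((uvSeq l m n i).1.length : ℝ)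
      ≤ ((uvSeq l m n i).1.count false : ℝ) ∧
    (∏ j ∈ Finset.Icc 1 i, (1 + ((2 : ℝ) ^ (2 ^ j))⁻¹)⁻¹) * ((uvSeq l m n i).2.length : ℝ)
      ≤ ((uvSeq l m n i).2.count true : ℝ) := by
  induction i, hi using Nat.le_induction with
  | base =>
    have e1 : uvSeq l m n 1 = (wpow [false] (m 0) ++ wpow [true] (l 0),
        wpow [false] (m 0) ++ wpow [true] (n 0)) := rfl
    rw [e1]
    simp only [Finset.Icc_self, Finset.prod_singleton, List.count_append, List.length_append,
      wpow_length, wpow_count, hl, hm, hn]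
    norm_num
  | succ i hi ih =>
    have key1' := key1 l m n hl hm hn i hi
    have key2' := key2 l m n hl hm hn i
    set A := ((uvSeq l m n i).1.length : ℝ) with hA
    set B := ((uvSeq l m n i).2.length : ℝ) with hB
    set zu := ((uvSeq l m n i).1.count false : ℝ) with hzu
    set ov := ((uvSeq l m n i).2.count true : ℝ) with hov
    set P := ∏ j ∈ Finset.Icc 1 i, (1 + ((2 : ℝ) ^ (2 ^ j))⁻¹)⁻¹ with hP
    have hPnn : 0 ≤ P := Finset.prod_nonneg (fun j _ => by positivity)
    set ε := ((2 : ℝ) ^ (2 ^ (i+1)))⁻¹ with hε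
    have hεpos : 0 < ε := by positivity
    have h2E : (0:ℝ) < 2 ^ (2 ^ (i+1)) := by positivity
    have hprod : ∏ j ∈ Finset.Icc 1 (i+1), (1 + ((2 : ℝ) ^ (2 ^ j))⁻¹)⁻¹
        = P * (1 + ε)⁻¹ := by
      rw [hP, hε, ← Finset.prod_Icc_succ_top (by omega : 1 ≤ i + 1)]
    have hk1 : (l i : ℝ) * B ≤ (m i : ℝ) * A * ε := by
      have := (Nat.cast_le (α := ℝ)).2 key1'
      push_cast at this
      rw [hε, show (m i : ℝ) * A * ((2:ℝ) ^ (2 ^ (i+1)))⁻¹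
        = ((m i : ℝ) * A) / 2 ^ (2 ^ (i+1)) from by ring, le_div_iff₀ h2E]
      nlinarith [this]
    have hk2 : (m i : ℝ) * A ≤ (n i : ℝ) * B * ε := by
      have := (Nat.cast_le (α := ℝ)).2 key2'
      push_cast at this
      rw [hε, show (n i : ℝ) * B * ((2:ℝ) ^ (2 ^ (i+1)))⁻¹
        = ((n i : ℝ) * B) / 2 ^ (2 ^ (i+1)) from by ring, le_div_iff₀ h2E]
      nlinarith [this]
    have h1ε : (0:ℝ) < 1 + ε := by linarith
    constructor
    · rw [lenA, cntA, hprod]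
      push_cast
      have step1 : P * (1 + ε)⁻¹ * ((m i : ℝ) * A + (l i : ℝ) * B)
          ≤ P * (1 + ε)⁻¹ * ((1 + ε) * ((m i : ℝ) * A)) := by
        apply mul_le_mul_of_nonneg_left ?_ (by positivity)
        nlinarith [hk1]
      have step2 : P * (1 + ε)⁻¹ * ((1 + ε) * ((m i : ℝ) * A)) = (m i : ℝ) * (P * A) := by
        field_simp
      have step3 : (m i : ℝ) * (P * A) ≤ (m i : ℝ) * zu :=
        mul_le_mul_of_nonneg_left ih.1 (by positivity)
      have step4 : (m i : ℝ) * zu ≤ (m i : ℝ) * zu + (l i : ℝ) * ((uvSeq l m n i).2.count false : ℝ) := by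
        have : (0:ℝ) ≤ (l i : ℝ) * ((uvSeq l m n i).2.count false : ℝ) := by positivity
        linarith
      linarith
    · rw [lenB, cntB, hprod]
      push_cast
      have step1 : P * (1 + ε)⁻¹ * ((m i : ℝ) * A + (n i : ℝ) * B)
          ≤ P * (1 + ε)⁻¹ * ((1 + ε) * ((n i : ℝ) * B)) := by
        apply mul_le_mul_of_nonneg_left ?_ (by positivity)
        nlinarith [hk2]
      have step2 : P * (1 + ε)⁻¹ * ((1 + ε) * ((n i : ℝ) * B)) = (n i : ℝ) * (P * B) := by
        field_simp
      have step3 : (n i : ℝ) * (P * B) ≤ (n i : ℝ) * ov :=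
        mul_le_mul_of_nonneg_left ih.2 (by positivity)
      have step4 : (n i : ℝ) * ov ≤ (m i : ℝ) * ((uvSeq l m n i).1.count true : ℝ) + (n i : ℝ) * ov := by
        have : (0:ℝ) ≤ (m i : ℝ) * ((uvSeq l m n i).1.count true : ℝ) := by positivity
        linarith
      linarith

end real


theorem stmt7 (l m n : ℕ → ℕ) (hl : ∀ i, l i = 2 ^ (2 * 2 ^ i + 4))
    (hm : ∀ i, m i = 2 ^ (8 * 2 ^ i)) (hn : ∀ i, n i = 2 ^ (10 * 2 ^ i)) (i : ℕ) (hi : 1 ≤ i) :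
    min (((uvSeq l m n i).1.count false : ℝ) / ((uvSeq l m n i).1.length : ℝ))
        (((uvSeq l m n i).2.count true : ℝ) / ((uvSeq l m n i).2.length : ℝ))
      ≥ ∏ j ∈ Finset.Icc 1 i, (1 + ((2 : ℝ) ^ (2 ^ j))⁻¹)⁻¹ := by
  have hmain := main_ind l m n hl hm hn i hi
  have hpos := len_pos l m n hm i
  have hA : (0:ℝ) < ((uvSeq l m n i).1.length : ℝ) := by exact_mod_cast hpos.1
  have hB : (0:ℝ) < ((uvSeq l m n i).2.length : ℝ) := by exact_mod_cast hpos.2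
  rw [ge_iff_le, le_min_iff]
  constructor
  · rw [le_div_iff₀ hA]; exact hmain.1
  · rw [le_div_iff₀ hB]; exact hmain.2
end

section
/- Synchronization lemma: let w be a factor of u^{(h)} containing 10 as a factor. Then there exist unique letters x, y ∈ {0,1}, a word v, a non-empty suffix s of σ_h(x), and a non-empty prefix p of σ_h(y), such that xvy is a factor of u^{(h+1)} and w = s σ_h(v) p. -/
/-!
Every image `σ_h(c) = 0^{m_h} 1^{…}` is a run `0^a 1^b` with `b > 0` that starts with `0`, so
inside `σ_h(V)` the factor `10` occurs only across the border of two consecutive images. A factor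
containing `10` therefore straddles a border, which yields the decomposition `s σ_h(v) p`. For
uniqueness, the first image (or its suffix `s`) is recovered as the maximal `0^a 1^b` prefix of
the word, and the images of `0` and `1` have different lengths since `l_h ≠ n_h`; peeling off
images one at a time determines `s`, `v` and `p`.
-/

def IsZeroOneRun (A : List Bool) : Prop :=
  ∃ a b : ℕ, 0 < b ∧ A = List.replicate a false ++ List.replicate b true

def zeroOnePrefix (X : List Bool) : List Bool :=
  X.takeWhile (! ·) ++ (X.dropWhile (! ·)).takeWhile id

namespace IsZeroOneRun

variable {A B A' B' : List Bool}

theorem not_infix_true_false (hA : IsZeroOneRun A) : ¬ [true, false] <:+: A := by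
  obtain ⟨a, b, -, rfl⟩ := hA
  intro htf
  have hsorted : (List.replicate a false ++ List.replicate b true).Pairwise (· ≤ ·) := by
    simp [List.pairwise_append, List.pairwise_replicate]
  exact absurd (List.pairwise_pair.mp (hsorted.sublist htf.sublist)) (by decide)

theorem infix_true_false_append (hA : IsZeroOneRun A) (hB : B.head? = some false) :
    [true, false] <:+: A ++ B := by
  obtain ⟨a, b, hb, rfl⟩ := hA
  obtain ⟨B, rfl⟩ : ∃ B₀, B = false :: B₀ := by
    cases B <;> simp_all
  obtain ⟨b, rfl⟩ : ∃ k, b = k + 1 := ⟨b - 1, by omega⟩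
  exact ⟨List.replicate a false ++ List.replicate b true, B, by simp [List.replicate_succ']⟩

theorem zeroOnePrefix_append (hA : IsZeroOneRun A) (hB : B.head? = some false) :
    zeroOnePrefix (A ++ B) = A := by
  obtain ⟨a, b, hb, rfl⟩ := hA
  obtain ⟨B, rfl⟩ : ∃ B₀, B = false :: B₀ := by
    cases B <;> simp_all
  obtain ⟨b, rfl⟩ : ∃ k, b = k + 1 := ⟨b - 1, by omega⟩
  simp [zeroOnePrefix, List.replicate_succ]

theorem append_inj (hA : IsZeroOneRun A) (hA' : IsZeroOneRun A') (he : A ++ B = A' ++ B')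
    (hB : B.head? = some false) (hB' : B'.head? = some false) : A = A' ∧ B = B' := by
  -- `A` is the maximal prefix of `A ++ B` of the form `0^a 1^b`
  have hAA' : A = A' := by
    rw [← hA.zeroOnePrefix_append hB, ← hA'.zeroOnePrefix_append hB', he]
  subst hAA'
  exact ⟨rfl, List.append_cancel_left he⟩

theorem of_suffix (hA : IsZeroOneRun A) {s : List Bool} (hs : s <:+ A) (hne : s ≠ []) :
    IsZeroOneRun s := by
  obtain ⟨a, b, hb, rfl⟩ := hA
  obtain ⟨t, ht⟩ := hs
  have hlen := congrArg List.length ht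
  simp only [List.length_append, List.length_replicate] at hlen
  have hs0 : 0 < s.length := List.length_pos_iff.mpr hne
  refine ⟨a - t.length, b - (t.length - a), by omega, ?_⟩
  rw [← List.drop_left (l₁ := t) (l₂ := s), ht, List.drop_append, List.drop_replicate,
    List.length_replicate, List.drop_replicate]

end IsZeroOneRun

section Substitution

variable (l m n : ℕ → ℕ) (h : ℕ)

theorem subw_append (u v : List Bool) :
    subw l m n h (u ++ v) = subw l m n h u ++ subw l m n h v := by
  simp [subw]

theorem subw_cons (c : Bool) (v : List Bool) :
    subw l m n h (c :: v) = subw l m n h [c] ++ subw l m n h v :=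
  subw_append l m n h [c] v

theorem subw_singleton (c : Bool) :
    subw l m n h [c] = List.replicate (m h) false ++
      List.replicate (if c then n h else l h) true := by
  simp [subw]

variable {l m n h}

theorem isZeroOneRun_subw_singleton (hl : 0 < l h) (hn : 0 < n h) (c : Bool) :
    IsZeroOneRun (subw l m n h [c]) :=
  ⟨m h, if c then n h else l h, by cases c <;> simpa, subw_singleton l m n h c⟩

theorem head?_of_prefix_subw_singleton (hm : 0 < m h) {p : List Bool} {c : Bool}
    (hp : p <+: subw l m n h [c]) (hne : p ≠ []) : p.head? = some false := by
  obtain ⟨k, hk⟩ : ∃ k, m h = k + 1 := ⟨m h - 1, by omega⟩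
  obtain ⟨t, ht⟩ := hp
  cases p with
  | nil => exact absurd rfl hne
  | cons d p =>
    rw [subw_singleton, hk, List.replicate_succ] at ht
    simp_all

theorem head?_subw_append (hm : 0 < m h) {v p : List Bool} {y : Bool}
    (hpy : p <+: subw l m n h [y]) (hp : p ≠ []) : (subw l m n h v ++ p).head? = some false := by
  cases v with
  | nil => simpa [subw] using head?_of_prefix_subw_singleton hm hpy hp
  | cons c v =>
    have hc : subw l m n h [c] ≠ [] := by simp [subw, hm.ne']
    rw [subw_cons, List.append_assoc, List.head?_append,
      head?_of_prefix_subw_singleton hm (List.prefix_refl _) hc, Option.some_or]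

theorem subw_singleton_injective (hln : l h ≠ n h) {c c' : Bool}
    (he : subw l m n h [c] = subw l m n h [c']) : c = c' := by
  have := congrArg List.length he
  cases c <;> cases c' <;> simp_all [subw_singleton]

theorem not_infix_true_false_of_prefix_subw_singleton (hl : 0 < l h) (hn : 0 < n h)
    {p : List Bool} {c : Bool} (hp : p <+: subw l m n h [c]) : ¬ [true, false] <:+: p :=
  fun htf => (isZeroOneRun_subw_singleton hl hn c).not_infix_true_false (htf.trans hp.isInfix)

theorem infix_true_false_subw_cons_append (hl : 0 < l h) (hm : 0 < m h) (hn : 0 < n h)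
    {c y : Bool} {v p : List Bool} (hpy : p <+: subw l m n h [y]) (hp : p ≠ []) :
    [true, false] <:+: subw l m n h (c :: v) ++ p := by
  rw [subw_cons, List.append_assoc]
  exact (isZeroOneRun_subw_singleton hl hn c).infix_true_false_append
    (head?_subw_append hm hpy hp)

theorem eq_nil_of_prefix_subw_singleton_eq (hl : 0 < l h) (hm : 0 < m h) (hn : 0 < n h)
    {v p q : List Bool} {y z : Bool} (hqz : q <+: subw l m n h [z])
    (hpy : p <+: subw l m n h [y]) (hp : p ≠ []) (he : q = subw l m n h v ++ p) : v = [] := by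
  cases v with
  | nil => rfl
  | cons c v =>
    subst he
    exact absurd (infix_true_false_subw_cons_append hl hm hn hpy hp)
      (not_infix_true_false_of_prefix_subw_singleton hl hn hqz)

theorem subw_append_prefix_inj (hl : 0 < l h) (hm : 0 < m h) (hn : 0 < n h) (hln : l h ≠ n h)
    {v v' p p' : List Bool} {y y' : Bool}
    (hpy : p <+: subw l m n h [y]) (hp : p ≠ [])
    (hpy' : p' <+: subw l m n h [y']) (hp' : p' ≠ [])
    (he : subw l m n h v ++ p = subw l m n h v' ++ p') : v = v' ∧ p = p' := by
  induction v generalizing v' with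
  | nil =>
    obtain rfl := eq_nil_of_prefix_subw_singleton_eq hl hm hn hpy hpy' hp' he
    exact ⟨rfl, he⟩
  | cons c v ih =>
    cases v' with
    | nil =>
      exact absurd (eq_nil_of_prefix_subw_singleton_eq hl hm hn hpy' hpy hp he.symm)
        (List.cons_ne_nil c v)
    | cons c' v' =>
      rw [subw_cons l m n h c v, subw_cons l m n h c' v', List.append_assoc,
        List.append_assoc] at he
      obtain ⟨hcc', hrest⟩ := (isZeroOneRun_subw_singleton hl hn c).append_inj
        (isZeroOneRun_subw_singleton hl hn c') he (head?_subw_append hm hpy hp)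
        (head?_subw_append hm hpy' hp')
      obtain ⟨rfl, rfl⟩ := ih hrest
      exact ⟨by rw [subw_singleton_injective hln hcc'], rfl⟩

theorem suffix_subw_append_prefix_inj (hl : 0 < l h) (hm : 0 < m h) (hn : 0 < n h)
    (hln : l h ≠ n h) {s v p s' v' p' : List Bool} {x y x' y' : Bool}
    (hsx : s <:+ subw l m n h [x]) (hs : s ≠ []) (hpy : p <+: subw l m n h [y]) (hp : p ≠ [])
    (hsx' : s' <:+ subw l m n h [x']) (hs' : s' ≠ [])
    (hpy' : p' <+: subw l m n h [y']) (hp' : p' ≠ [])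
    (he : s ++ subw l m n h v ++ p = s' ++ subw l m n h v' ++ p') :
    s = s' ∧ v = v' ∧ p = p' := by
  rw [List.append_assoc, List.append_assoc] at he
  obtain ⟨rfl, hrest⟩ := ((isZeroOneRun_subw_singleton hl hn x).of_suffix hsx hs).append_inj
    ((isZeroOneRun_subw_singleton hl hn x').of_suffix hsx' hs') he
    (head?_subw_append hm hpy hp) (head?_subw_append hm hpy' hp')
  exact ⟨rfl, subw_append_prefix_inj hl hm hn hln hpy hp hpy' hp' hrest⟩

theorem exists_subw_append_of_prefix_subw {V b : List Bool} (hb : b <+: subw l m n h V)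
    (hb0 : b ≠ []) : ∃ v y p, v ++ [y] <+: V ∧ p <+: subw l m n h [y] ∧ p ≠ [] ∧
      b = subw l m n h v ++ p := by
  induction V generalizing b with
  | nil => exact absurd (List.prefix_nil.mp hb) hb0
  | cons c V ih =>
    obtain ⟨t, ht⟩ := hb
    rw [subw_cons] at ht
    rcases List.append_eq_append_iff.mp ht with ⟨t', hc, -⟩ | ⟨b', rfl, hb'⟩
    · exact ⟨[], c, b, by simp, ⟨t', hc.symm⟩, hb0, by simp [subw]⟩
    rcases eq_or_ne b' [] with rfl | hb'0
    · exact ⟨[], c, subw l m n h [c] ++ [], by simp, by simp, hb0, by simp [subw]⟩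
    obtain ⟨v, y, p, hvy, hpy, hp, rfl⟩ := ih ⟨t, hb'.symm⟩ hb'0
    exact ⟨c :: v, y, p, List.cons_prefix_cons.mpr ⟨rfl, hvy⟩, hpy, hp,
      by rw [subw_cons l m n h c v, List.append_assoc]⟩

theorem exists_synchronization (hl : 0 < l h) (hn : 0 < n h) {V w : List Bool}
    (hw : w <:+: subw l m n h V) (htf : [true, false] <:+: w) :
    ∃ x v y s p, x :: v ++ [y] <:+: V ∧ s <:+ subw l m n h [x] ∧ s ≠ [] ∧
      p <+: subw l m n h [y] ∧ p ≠ [] ∧ w = s ++ subw l m n h v ++ p := by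
  induction V with
  | nil => simp_all [subw]
  | cons c V ih =>
    rw [subw_cons] at hw
    rcases List.infix_append_iff_ne_nil.mp hw with hwc | hwV | ⟨s, b, hs, hb, rfl, hsc, hbV⟩
    · exact absurd (htf.trans hwc) (isZeroOneRun_subw_singleton hl hn c).not_infix_true_false
    · obtain ⟨x, v, y, s, p, hV, rest⟩ := ih hwV
      exact ⟨x, v, y, s, p, hV.trans (List.infix_cons List.infix_rfl), rest⟩
    · obtain ⟨v, y, p, hvy, hpy, hp, rfl⟩ := exists_subw_append_of_prefix_subw hbV hb
      exact ⟨c, v, y, s, p, (List.cons_prefix_cons.mpr ⟨rfl, hvy⟩).isInfix, hsc, hs, hpy, hp,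
        (List.append_assoc _ _ _).symm⟩

end Substitution

theorem isFactor_iff {U : ℕ → Bool} {w : List Bool} :
    IsFactor U w ↔ ∃ k, ∀ j (hj : j < w.length), w[j] = U (k + j) := by
  refine exists_congr fun k => ⟨fun hw j hj => ?_, fun hw => List.ext_getElem (by simp) ?_⟩
  · simp_rw [List.getElem_of_eq hw hj, List.getElem_map, List.getElem_range]
  · intro j hj _
    simp [hw j hj]

theorem isFactor_iff_exists_infix {U : ℕ → Bool} {W : ℕ → List Bool}
    (hWU : ∀ i k (hk : k < (W i).length), (W i)[k] = U k) (hW : ∀ k, ∃ i, k < (W i).length)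
    {w : List Bool} : IsFactor U w ↔ ∃ i, w <:+: W i := by
  simp_rw [isFactor_iff, List.infix_iff_getElem?]
  constructor
  · rintro ⟨k, hk⟩
    obtain ⟨i, hi⟩ := hW (w.length + k)
    refine ⟨i, k, hi.le, fun j hj => ?_⟩
    rw [List.getElem?_eq_getElem (by omega), hWU, hk, Nat.add_comm]
  · rintro ⟨i, k, hk, hw⟩
    refine ⟨k, fun j hj => ?_⟩
    have hjk : j + k < (W i).length := by omega
    have := hw j hj
    rw [List.getElem?_eq_getElem hjk, hWU, Option.some_inj] at this
    rw [← this, Nat.add_comm]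

section Iteration

variable {l m n : ℕ → ℕ}

theorem prefix_subw_of_prefix {h : ℕ} {u v : List Bool} (huv : u <+: v) :
    subw l m n h u <+: subw l m n h v := by
  obtain ⟨t, rfl⟩ := huv
  exact ⟨subw l m n h t, (subw_append l m n h u t).symm⟩

theorem two_mul_length_le_length_subw {h : ℕ} (hl : 0 < l h) (hm : 0 < m h) (hn : 0 < n h)
    (w : List Bool) : 2 * w.length ≤ (subw l m n h w).length := by
  induction w with
  | nil => simp
  | cons c w ih =>
    have hc : 2 ≤ (subw l m n h [c]).length := by
      cases c <;> simp [subw_singleton] <;> omega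
    rw [subw_cons, List.length_append, List.length_cons]
    omega

theorem wordIter_prefix_wordIter_succ (hm : ∀ i, 0 < m i) (i h : ℕ) :
    wordIter l m n i h <+: wordIter l m n (i + 1) h := by
  induction i generalizing h with
  | zero =>
    obtain ⟨k, hk⟩ : ∃ k, m h = k + 1 := ⟨m h - 1, by have := hm h; omega⟩
    simp [wordIter, subw, hk, List.replicate_succ]
  | succ i ih => exact prefix_subw_of_prefix (ih (h + 1))

theorem wordIter_prefix_of_le (hm : ∀ i, 0 < m i) {i j : ℕ} (hij : i ≤ j) (h : ℕ) :
    wordIter l m n i h <+: wordIter l m n j h := by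
  induction j, hij using Nat.le_induction with
  | base => exact List.prefix_refl _
  | succ j _ ih => exact ih.trans (wordIter_prefix_wordIter_succ hm j h)

theorem lt_length_wordIter (hl : ∀ i, 0 < l i) (hm : ∀ i, 0 < m i) (hn : ∀ i, 0 < n i)
    (i h : ℕ) : i < (wordIter l m n i h).length := by
  induction i generalizing h with
  | zero => simp [wordIter]
  | succ i ih =>
    have := two_mul_length_le_length_subw (hl h) (hm h) (hn h) (wordIter l m n i (h + 1))
    have := ih (h + 1)
    simp only [wordIter]
    omega

theorem getElem_wordIter (hl : ∀ i, 0 < l i) (hm : ∀ i, 0 < m i) (hn : ∀ i, 0 < n i)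
    {i h k : ℕ} (hk : k < (wordIter l m n i h).length) :
    (wordIter l m n i h)[k] = limWord l m n h k := by
  have hk' : k < (wordIter l m n (k + 1) h).length :=
    (lt_length_wordIter hl hm hn (k + 1) h).trans' (Nat.lt_succ_self k)
  rw [limWord, List.getD_eq_getElem _ _ hk']
  rcases le_total i (k + 1) with hik | hik
  · exact (wordIter_prefix_of_le hm hik h).getElem hk
  · exact ((wordIter_prefix_of_le hm hik h).getElem hk').symm

theorem isFactor_limWord_iff (hl : ∀ i, 0 < l i) (hm : ∀ i, 0 < m i) (hn : ∀ i, 0 < n i)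
    {h : ℕ} {w : List Bool} :
    IsFactor (limWord l m n h) w ↔ ∃ i, w <:+: wordIter l m n i h :=
  isFactor_iff_exists_infix (fun _ _ hk => getElem_wordIter hl hm hn hk)
    (fun k => ⟨k, lt_length_wordIter hl hm hn k h⟩)

end Iteration

theorem stmt15 (l m n : ℕ → ℕ) (hlpos : ∀ i, 0 < l i)
    (hlm : ∀ i, l i < m i) (hmn : ∀ i, m i < n i) (h : ℕ) (w : List Bool)
    (hw : IsFactor (limWord l m n h) w) (hlong : [true, false] <:+: w) :
    ∃! t : List Bool × List Bool × List Bool,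
      ∃ x y : Bool,
        t.1 ≠ [] ∧ t.1 <:+ subw l m n h [x] ∧
        t.2.2 ≠ [] ∧ t.2.2 <+: subw l m n h [y] ∧
        IsFactor (limWord l m n (h + 1)) (x :: t.2.1 ++ [y]) ∧
        w = t.1 ++ subw l m n h t.2.1 ++ t.2.2 := by
  have hm : ∀ i, 0 < m i := fun i => (hlpos i).trans (hlm i)
  have hn : ∀ i, 0 < n i := fun i => (hm i).trans (hmn i)
  have hln : l h ≠ n h := ((hlm h).trans (hmn h)).ne
  obtain ⟨i, hwi⟩ := (isFactor_limWord_iff hlpos hm hn).mp hw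
  obtain ⟨x, v, y, s, p, hxvy, hsx, hs, hpy, hp, rfl⟩ :=
    exists_synchronization (hlpos h) (hn h)
      (hwi.trans (wordIter_prefix_wordIter_succ hm i h).isInfix) hlong
  have hfac := (isFactor_limWord_iff hlpos hm hn).mpr ⟨i, hxvy⟩
  refine ⟨(s, v, p), ⟨x, y, hs, hsx, hp, hpy, hfac, rfl⟩, ?_⟩
  rintro ⟨s', v', p'⟩ ⟨x', y', hs', hsx', hp', hpy', -, he⟩
  obtain ⟨rfl, rfl, rfl⟩ := suffix_subw_append_prefix_inj (hlpos h) (hm h) (hn h) hln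
    hsx' hs' hpy' hp' hsx hs hpy hp he.symm
  rfl
end
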